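/- Let A = Σ_{i=1}^{N} A_i and B = Σ_{i=1}^{N} B_i be extensive operators, both of range R, with local norms ‖A‖_l ≤ a and ‖B‖_l ≤ b. Then for every integer q ≥ 1 there exists a family (C_i)_{i=1,…,N} of matrices such that each C_i is supported on {i, i+1, …, min(i + q(R−1) + R − 1, N)} (an interval of at most q(R−1)+R consecutive sites), (1/q!)·(ad_A)^{q} B = Σ_{i=1}^{N} C_i, and max_i ‖C_i‖ ≤ (q+1)·(2Ra)^{q}·b, where ad_A X := [A, X]. -/

import Mathlib

open scoped BigOperators Nat Matrix.Norms.L2Operator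

/-- A matrix acting on the configuration space `Fin N → Fin d` is *supported* on a set `S`
of sites if `A x y = 0` whenever the configurations `x, y` differ at some site outside `S`,
and `A x y` depends only on the restrictions of `x` and `y` to `S`. -/
def SupportedOn {N d : ℕ} (A : Matrix (Fin N → Fin d) (Fin N → Fin d) ℂ)
    (S : Set (Fin N)) : Prop :=
  (∀ x y, (∃ i ∉ S, x i ≠ y i) → A x y = 0) ∧
  (∀ x y x' y', (∀ i ∈ S, x i = x' i) → (∀ i ∈ S, y i = y' i) →
    (∀ i ∉ S, x i = y i) → (∀ i ∉ S, x' i = y' i) → A x y = A x' y')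

/-!
Induction on `q`. In `[Σₚ Aₚ, Σₘ Cₘ]` only pairs `(p, m)` whose supports overlap contribute,
because operators with disjoint supports commute; filing each such pair under the site
`min p m` writes the commutator again as a sum of local terms whose supports grow by `R - 1`.
At most `q(R - 1) + 2R - 1 ≤ (q + 2)R` pairs are filed under a given site, each of norm at most
`2a‖Cₘ‖`, so the local norms of `(ad_A)^q B` are bounded by `(q + 1)! (2Ra)^q b`.
-/

namespace SupportedOn

variable {N d : ℕ} {A B : Matrix (Fin N → Fin d) (Fin N → Fin d) ℂ} {S T : Set (Fin N)}

lemma smul (c : ℂ) (h : SupportedOn A S) : SupportedOn (c • A) S :=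
  ⟨fun x y hxy => by simp [h.1 x y hxy],
    fun x y x' y' h₁ h₂ h₃ h₄ => by simp [h.2 x y x' y' h₁ h₂ h₃ h₄]⟩

lemma sub (hA : SupportedOn A S) (hB : SupportedOn B S) : SupportedOn (A - B) S :=
  ⟨fun x y hxy => by simp [hA.1 x y hxy, hB.1 x y hxy],
    fun x y x' y' h₁ h₂ h₃ h₄ => by
      simp [hA.2 x y x' y' h₁ h₂ h₃ h₄, hB.2 x y x' y' h₁ h₂ h₃ h₄]⟩

lemma sum {ι : Type*} {s : Finset ι} {f : ι → Matrix (Fin N → Fin d) (Fin N → Fin d) ℂ}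
    (h : ∀ i ∈ s, SupportedOn (f i) S) : SupportedOn (∑ i ∈ s, f i) S :=
  ⟨fun x y hxy => by
      simpa [Matrix.sum_apply] using Finset.sum_eq_zero fun i hi => (h i hi).1 x y hxy,
    fun x y x' y' h₁ h₂ h₃ h₄ => by
      simpa [Matrix.sum_apply] using
        Finset.sum_congr rfl fun i hi => (h i hi).2 x y x' y' h₁ h₂ h₃ h₄⟩

lemma eq_of_apply_ne_zero (h : SupportedOn A S) {x y : Fin N → Fin d} (hxy : A x y ≠ 0)
    {i : Fin N} (hi : i ∉ S) : x i = y i := by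
  by_contra hne
  exact hxy (h.1 x y ⟨i, hi, hne⟩)

lemma apply_piCongrRight (h : SupportedOn A S) {e : Fin N → Equiv.Perm (Fin d)}
    (he : ∀ i ∈ S, e i = 1) (x y : Fin N → Fin d) :
    A (Equiv.piCongrRight e x) (Equiv.piCongrRight e y) = A x y := by
  by_cases hxy : ∀ i ∉ S, x i = y i
  · exact h.2 _ _ _ _ (fun i hi => by simp [he i hi]) (fun i hi => by simp [he i hi])
      (fun i hi => by simp [hxy i hi]) hxy
  · push Not at hxy
    obtain ⟨i, hi, hne⟩ := hxy
    rw [h.1 x y ⟨i, hi, hne⟩, h.1 _ _ ⟨i, hi, (e i).injective.ne hne⟩]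

lemma of_apply_piCongrRight (h₀ : ∀ x y, (∃ i ∉ S, x i ≠ y i) → A x y = 0)
    (hinv : ∀ e : Fin N → Equiv.Perm (Fin d), (∀ i ∈ S, e i = 1) →
      ∀ x y, A (Equiv.piCongrRight e x) (Equiv.piCongrRight e y) = A x y) :
    SupportedOn A S := by
  classical
  refine ⟨h₀, fun x y x' y' hx hy hxy hx'y' => ?_⟩
  let e : Fin N → Equiv.Perm (Fin d) := fun i => if i ∈ S then 1 else Equiv.swap (x i) (x' i)
  have hex : Equiv.piCongrRight e x = x' := by
    ext i
    by_cases hi : i ∈ S <;> simp [e, hi, hx]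
  have hey : Equiv.piCongrRight e y = y' := by
    ext i
    by_cases hi : i ∈ S <;> simp [e, hi, hy, ← hxy i, ← hx'y' i]
  rw [← hex, ← hey, hinv e (fun i hi => if_pos hi)]

lemma mono (h : SupportedOn A S) (hST : S ⊆ T) : SupportedOn A T :=
  of_apply_piCongrRight (fun x y ⟨i, hi, hne⟩ => h.1 x y ⟨i, fun hiS => hi (hST hiS), hne⟩)
    fun _ he => h.apply_piCongrRight fun i hi => he i (hST hi)

lemma mul (hA : SupportedOn A S) (hB : SupportedOn B T) : SupportedOn (A * B) (S ∪ T) := by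
  refine of_apply_piCongrRight ?_ fun e he x y => ?_
  · rintro x y ⟨i, hi, hne⟩
    rw [Matrix.mul_apply]
    refine Finset.sum_eq_zero fun z _ => ?_
    by_cases hxz : A x z = 0
    · rw [hxz, zero_mul]
    · have hzi : x i = z i := hA.eq_of_apply_ne_zero hxz fun h => hi (Or.inl h)
      rw [hB.1 z y ⟨i, fun h => hi (Or.inr h), hzi ▸ hne⟩, mul_zero]
  · simp only [Matrix.mul_apply]
    rw [← (Equiv.piCongrRight e).sum_comp]
    simp only [hA.apply_piCongrRight fun i hi => he i (Or.inl hi),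
      hB.apply_piCongrRight fun i hi => he i (Or.inr hi)]

lemma commutator (hA : SupportedOn A S) (hB : SupportedOn B T) :
    SupportedOn (A * B - B * A) (S ∪ T) :=
  (hA.mul hB).sub ((hB.mul hA).mono (Set.union_comm T S).le)

lemma mul_apply_of_disjoint [DecidablePred (· ∈ S)] (hA : SupportedOn A S)
    (hB : SupportedOn B T) (hST : Disjoint S T) (x y : Fin N → Fin d) :
    (A * B) x y = A x (S.piecewise y x) * B (S.piecewise y x) y := by
  rw [Matrix.mul_apply]
  refine Fintype.sum_eq_single _ fun z hz => ?_
  obtain ⟨i, hi⟩ := Function.ne_iff.mp hz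
  by_cases hiS : i ∈ S
  · rw [Set.piecewise_eq_of_mem _ _ _ hiS] at hi
    rw [hB.1 z y ⟨i, hST.notMem_of_mem_left hiS, hi⟩, mul_zero]
  · rw [Set.piecewise_eq_of_notMem _ _ _ hiS] at hi
    rw [hA.1 x z ⟨i, hiS, Ne.symm hi⟩, zero_mul]

lemma commute_of_disjoint (hA : SupportedOn A S) (hB : SupportedOn B T) (hST : Disjoint S T) :
    Commute A B := by
  classical
  ext x y
  rw [hA.mul_apply_of_disjoint hB hST, hB.mul_apply_of_disjoint hA hST.symm]
  set u := S.piecewise y x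
  set v := T.piecewise y x
  have hu : ∀ i ∉ S, u i = x i := fun i hi => Set.piecewise_eq_of_notMem _ _ _ hi
  have hv : ∀ i ∉ T, v i = x i := fun i hi => Set.piecewise_eq_of_notMem _ _ _ hi
  by_cases hxy : ∀ i ∉ S ∪ T, x i = y i
  · have hAuv : A x u = A v y := by
      refine hA.2 x u v y (fun i hi => (hv i (hST.notMem_of_mem_left hi)).symm)
        (fun i hi => Set.piecewise_eq_of_mem _ _ _ hi) (fun i hi => (hu i hi).symm) ?_
      intro i hiS
      by_cases hiT : i ∈ T
      · exact Set.piecewise_eq_of_mem _ _ _ hiT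
      · rw [hv i hiT, hxy i (by simp [hiS, hiT])]
    have hBuv : B u y = B x v := by
      refine hB.2 u y x v (fun i hi => hu i (hST.notMem_of_mem_right hi))
        (fun i hi => (Set.piecewise_eq_of_mem _ _ _ hi).symm) ?_ (fun i hi => (hv i hi).symm)
      intro i hiT
      by_cases hiS : i ∈ S
      · exact Set.piecewise_eq_of_mem _ _ _ hiS
      · rw [hu i hiS, hxy i (by simp [hiS, hiT])]
    rw [hAuv, hBuv, mul_comm]
  · push Not at hxy
    obtain ⟨i, hi, hne⟩ := hxy
    rw [Set.mem_union, not_or] at hi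
    have hBu : B u y = 0 := hB.1 u y ⟨i, hi.2, by rwa [hu i hi.1]⟩
    have hAv : A v y = 0 := hA.1 v y ⟨i, hi.1, by rwa [hv i hi.2]⟩
    rw [hBu, hAv, mul_zero, mul_zero]

end SupportedOn

lemma norm_mul_sub_mul_le {R : Type*} [NonUnitalSeminormedRing R] (x y : R) :
    ‖x * y - y * x‖ ≤ 2 * ‖x‖ * ‖y‖ :=
  calc ‖x * y - y * x‖ ≤ ‖x * y‖ + ‖y * x‖ := norm_sub_le _ _
    _ ≤ ‖x‖ * ‖y‖ + ‖y‖ * ‖x‖ := add_le_add (norm_mul_le _ _) (norm_mul_le _ _)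
    _ = 2 * ‖x‖ * ‖y‖ := by ring

/-- Pairs `(i, j)` of sites whose blocks `[i, i + r]` and `[j, j + l]` intersect. -/
def overlappingPairs (N r l : ℕ) : Finset (Fin N × Fin N) :=
  {p | (p.1 : ℕ) ≤ p.2 + l ∧ (p.2 : ℕ) ≤ p.1 + r}

section Extensive

variable {N d : ℕ}

@[simp]
lemma mem_overlappingPairs {r l : ℕ} {p : Fin N × Fin N} :
    p ∈ overlappingPairs N r l ↔ (p.1 : ℕ) ≤ p.2 + l ∧ (p.2 : ℕ) ≤ p.1 + r := by
  simp [overlappingPairs]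

/-- An overlapping pair is determined by its smaller site and the difference of its sites,
which lies in `[-r, l]`. -/
lemma card_overlappingPairs_min_eq_le (r l : ℕ) (k : Fin N) :
    ({p ∈ overlappingPairs N r l | min p.1 p.2 = k} : Finset _).card ≤ l + r + 1 := by
  refine (Finset.card_le_card_of_injOn (fun p => (p.1 : ℤ) - p.2)
    (t := Finset.Icc (-(r : ℤ)) l) ?_ ?_).trans (by simp; omega)
  · intro p hp
    simp only [Finset.coe_filter, mem_overlappingPairs, Set.mem_ofPred_eq] at hp
    have := congrArg Fin.val hp.2
    simp only [Fin.coe_min] at this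
    simp only [Finset.coe_Icc, Set.mem_Icc]
    omega
  · intro p hp p' hp' hpp'
    simp only [Finset.coe_filter, mem_overlappingPairs, Set.mem_ofPred_eq] at hp hp'
    have h := congrArg Fin.val hp.2
    have h' := congrArg Fin.val hp'.2
    simp only [Fin.coe_min] at h h'
    simp only at hpp'
    ext <;> omega

lemma exists_commutator_eq_sum_local {r l : ℕ} {a c : ℝ}
    (A C : Fin N → Matrix (Fin N → Fin d) (Fin N → Fin d) ℂ)
    (hA : ∀ i : Fin N, SupportedOn (A i) (Fin.val ⁻¹' Set.Ico (i : ℕ) (i + (r + 1))))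
    (hC : ∀ i : Fin N, SupportedOn (C i) (Fin.val ⁻¹' Set.Ico (i : ℕ) (i + (l + 1))))
    (ha : ∀ i, ‖A i‖ ≤ a) (hc : ∀ i, ‖C i‖ ≤ c) :
    ∃ D : Fin N → Matrix (Fin N → Fin d) (Fin N → Fin d) ℂ,
      (∀ k : Fin N, SupportedOn (D k) (Fin.val ⁻¹' Set.Ico (k : ℕ) (k + (l + r + 1)))) ∧
      (∑ i, A i) * (∑ i, C i) - (∑ i, C i) * (∑ i, A i) = ∑ k, D k ∧
      ∀ k, ‖D k‖ ≤ (l + r + 1) * (2 * a * c) := by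
  let D k := ∑ p ∈ overlappingPairs N r l with min p.1 p.2 = k, (A p.1 * C p.2 - C p.2 * A p.1)
  refine ⟨D, fun k => ?_, ?_, fun k => ?_⟩
  · refine SupportedOn.sum fun p hp => ((hA p.1).commutator (hC p.2)).mono ?_
    rw [Finset.mem_filter, mem_overlappingPairs] at hp
    have hk := congrArg Fin.val hp.2
    rw [Fin.coe_min] at hk
    intro j hj
    simp only [Set.mem_union, Set.mem_preimage, Set.mem_Ico] at hj ⊢
    omega
  · have hfar : ∀ p ∉ overlappingPairs N r l, A p.1 * C p.2 - C p.2 * A p.1 = 0 := by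
      intro p hp
      rw [mem_overlappingPairs] at hp
      refine sub_eq_zero.2 ((hA p.1).commute_of_disjoint (hC p.2) ?_)
      refine Set.disjoint_left.2 fun j hj₁ hj₂ => hp ?_
      simp only [Set.mem_preimage, Set.mem_Ico] at hj₁ hj₂
      omega
    calc (∑ i, A i) * (∑ i, C i) - (∑ i, C i) * (∑ i, A i)
        = ∑ p : Fin N × Fin N, (A p.1 * C p.2 - C p.2 * A p.1) := by
          simp only [Finset.sum_mul_sum, Fintype.sum_prod_type, Finset.sum_sub_distrib]
          exact congrArg _ Finset.sum_comm
      _ = ∑ p ∈ overlappingPairs N r l, (A p.1 * C p.2 - C p.2 * A p.1) :=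
          (Finset.sum_subset (Finset.subset_univ _) fun p _ hp => hfar p hp).symm
      _ = ∑ k, D k := (Finset.sum_fiberwise _ _ _).symm
  · have ha₀ : 0 ≤ a := (norm_nonneg _).trans (ha k)
    have hc₀ : 0 ≤ c := (norm_nonneg _).trans (hc k)
    calc ‖D k‖ ≤ ∑ p ∈ overlappingPairs N r l with min p.1 p.2 = k,
          ‖A p.1 * C p.2 - C p.2 * A p.1‖ := norm_sum_le _ _
      _ ≤ ({p ∈ overlappingPairs N r l | min p.1 p.2 = k} : Finset _).card • (2 * a * c) :=
          Finset.sum_le_card_nsmul _ _ _ fun p _ =>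
            (norm_mul_sub_mul_le _ _).trans (by gcongr <;> simp [ha, hc])
      _ ≤ (l + r + 1) * (2 * a * c) := by
          rw [nsmul_eq_mul]
          gcongr
          exact_mod_cast card_overlappingPairs_min_eq_le r l k

lemma exists_iterate_commutator_eq_sum_local (r : ℕ) {a b : ℝ}
    (A B : Fin N → Matrix (Fin N → Fin d) (Fin N → Fin d) ℂ)
    (hA : ∀ i : Fin N, SupportedOn (A i) (Fin.val ⁻¹' Set.Ico (i : ℕ) (i + (r + 1))))
    (hB : ∀ i : Fin N, SupportedOn (B i) (Fin.val ⁻¹' Set.Ico (i : ℕ) (i + (r + 1))))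
    (ha : ∀ i, ‖A i‖ ≤ a) (hb : ∀ i, ‖B i‖ ≤ b) (q : ℕ) :
    ∃ C : Fin N → Matrix (Fin N → Fin d) (Fin N → Fin d) ℂ,
      (∀ i : Fin N, SupportedOn (C i) (Fin.val ⁻¹' Set.Ico (i : ℕ) (i + ((q + 1) * r + 1)))) ∧
      (fun X => (∑ i, A i) * X - X * (∑ i, A i))^[q] (∑ i, B i) = ∑ i, C i ∧
      ∀ i, ‖C i‖ ≤ (q + 1)! * (2 * (r + 1) * a) ^ q * b := by
  induction q with
  | zero => exact ⟨B, by simpa using hB, rfl, by simpa using hb⟩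
  | succ q ih =>
    obtain ⟨C, hC, hCsum, hCnorm⟩ := ih
    obtain ⟨D, hD, hDsum, hDnorm⟩ := exists_commutator_eq_sum_local A C hA hC ha hCnorm
    refine ⟨D, fun k => ?_, by rw [Function.iterate_succ_apply', hCsum, hDsum], fun k => ?_⟩
    · convert hD k using 4
      ring
    · have ha₀ : 0 ≤ a := (norm_nonneg _).trans (ha k)
      have hc₀ := (norm_nonneg _).trans (hCnorm k)
      calc ‖D k‖ ≤ ((q + 1) * r + r + 1 : ℕ) * (2 * a * ((q + 1)! * (2 * (r + 1) * a) ^ q * b)) :=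
            mod_cast hDnorm k
        _ ≤ ((q + 2) * (r + 1) : ℕ) * (2 * a * ((q + 1)! * (2 * (r + 1) * a) ^ q * b)) := by
            gcongr
            ring_nf
            omega
        _ = (q + 1 + 1)! * (2 * (r + 1) * a) ^ (q + 1) * b := by
            rw [Nat.factorial_succ (q + 1), pow_succ]
            push_cast
            ring

end Extensive

theorem iterated_commutator_of_extensive_operators_general {N d : ℕ}
    (R : ℕ) (hR : 1 ≤ R) (a b : ℝ)
    (A B : Fin N → Matrix (Fin N → Fin d) (Fin N → Fin d) ℂ)
    (hA : ∀ i, SupportedOn (A i) {j : Fin N | (i : ℕ) ≤ (j : ℕ) ∧ (j : ℕ) < (i : ℕ) + R})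
    (hB : ∀ i, SupportedOn (B i) {j : Fin N | (i : ℕ) ≤ (j : ℕ) ∧ (j : ℕ) < (i : ℕ) + R})
    (ha : ∀ i, ‖A i‖ ≤ a) (hb : ∀ i, ‖B i‖ ≤ b) (q : ℕ) :
    ∃ C : Fin N → Matrix (Fin N → Fin d) (Fin N → Fin d) ℂ,
      (∀ i, SupportedOn (C i)
        {j : Fin N | (i : ℕ) ≤ (j : ℕ) ∧ (j : ℕ) < (i : ℕ) + (q * (R - 1) + R)}) ∧
      ((q ! : ℂ))⁻¹ •
        ((fun X => (∑ i, A i) * X - X * (∑ i, A i))^[q] (∑ i, B i)) = ∑ i, C i ∧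
      ∀ i, ‖C i‖ ≤ ((q : ℝ) + 1) * (2 * (R : ℝ) * a) ^ q * b := by
  obtain ⟨r, rfl⟩ : ∃ r, R = r + 1 := ⟨R - 1, by omega⟩
  obtain ⟨C, hC, hCsum, hCnorm⟩ := exists_iterate_commutator_eq_sum_local r A B hA hB ha hb q
  refine ⟨fun i => (q ! : ℂ)⁻¹ • C i, fun i => ?_, by rw [hCsum, Finset.smul_sum], fun i => ?_⟩
  · have hlen : q * (r + 1 - 1) + (r + 1) = (q + 1) * r + 1 := by
      rw [Nat.add_sub_cancel]
      ring
    rw [hlen]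
    exact (hC i).smul _
  · calc ‖(q ! : ℂ)⁻¹ • C i‖ = (q ! : ℝ)⁻¹ * ‖C i‖ := by
          rw [norm_smul, norm_inv, Complex.norm_natCast]
      _ ≤ (q ! : ℝ)⁻¹ * ((q + 1)! * (2 * (r + 1) * a) ^ q * b) := by
          gcongr
          exact hCnorm i
      _ = (q + 1) * (2 * ((r + 1 : ℕ) : ℝ) * a) ^ q * b := by
          rw [Nat.factorial_succ]
          push_cast
          field_simp

/-- if `A = Σᵢ Aᵢ` and `B = Σᵢ Bᵢ` are extensive operators of range `R` with
local norms `≤ a`, `≤ b`, then for every `q ≥ 1` one can write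
`(1/q!) (ad_A)^q B = Σᵢ Cᵢ` with each `Cᵢ` supported on an interval of at most
`q(R−1) + R` consecutive sites starting at `i`, and `‖Cᵢ‖ ≤ (q+1) (2Ra)^q b`. -/
theorem iterated_commutator_of_extensive_operators {N d : ℕ} (hd : 2 ≤ d) (hN : 1 ≤ N)
    (R : ℕ) (hR : 1 ≤ R) (a b : ℝ)
    (A B : Fin N → Matrix (Fin N → Fin d) (Fin N → Fin d) ℂ)
    (hA : ∀ i, SupportedOn (A i) {j : Fin N | (i : ℕ) ≤ (j : ℕ) ∧ (j : ℕ) < (i : ℕ) + R})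
    (hB : ∀ i, SupportedOn (B i) {j : Fin N | (i : ℕ) ≤ (j : ℕ) ∧ (j : ℕ) < (i : ℕ) + R})
    (ha : ∀ i, ‖A i‖ ≤ a) (hb : ∀ i, ‖B i‖ ≤ b) (q : ℕ) (hq : 1 ≤ q) :
    ∃ C : Fin N → Matrix (Fin N → Fin d) (Fin N → Fin d) ℂ,
      (∀ i, SupportedOn (C i)
        {j : Fin N | (i : ℕ) ≤ (j : ℕ) ∧ (j : ℕ) < (i : ℕ) + (q * (R - 1) + R)}) ∧
      ((q ! : ℂ))⁻¹ •
        ((fun X => (∑ i, A i) * X - X * (∑ i, A i))^[q] (∑ i, B i)) = ∑ i, C i ∧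
      ∀ i, ‖C i‖ ≤ ((q : ℝ) + 1) * (2 * (R : ℝ) * a) ^ q * b :=
  iterated_commutator_of_extensive_operators_general R hR a b A B hA hB ha hb q
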